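/- arXiv:2503.07398 — 5 statements merged into one kernel-verified Lean document; each statement's English description precedes it below -/
import Mathlib

section
/- Let 𝒳 and 𝒴 be LFCM spaces, and let f : X → Y be a coarse map (not necessarily measurable). Then there exists a coarse measurable map f̃ : 𝒳 → 𝒴 that is close to f. -/
noncomputable section

open scoped ENNReal

/-! ## Relations -/

/-- Composition of relations: for `R ⊆ Z × Y` and `S ⊆ Y × X`,
`RelComp R S = {(z,x) | ∃ y, (z,y) ∈ R ∧ (y,x) ∈ S}`. -/
def RelComp {X Y Z : Type} (R : Set (Z × Y)) (S : Set (Y × X)) : Set (Z × X) :=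
  {p | ∃ y, (p.1, y) ∈ R ∧ (y, p.2) ∈ S}

/-- Transpose of a relation. -/
def RelTrans {X Y : Type} (R : Set (Y × X)) : Set (X × Y) := {p | (p.2, p.1) ∈ R}

/-! ## Coarse spaces -/

/-- A coarse structure on a set `X`. -/
structure CoarseSpace (X : Type) where
  entourages : Set (Set (X × X))
  diagonal_mem : {p : X × X | p.1 = p.2} ∈ entourages
  mem_of_subset : ∀ {E F : Set (X × X)}, E ∈ entourages → F ⊆ E → F ∈ entourages
  union_mem : ∀ {E F : Set (X × X)}, E ∈ entourages → F ∈ entourages → E ∪ F ∈ entourages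
  transpose_mem : ∀ {E : Set (X × X)}, E ∈ entourages → RelTrans E ∈ entourages
  comp_mem : ∀ {E F : Set (X × X)}, E ∈ entourages → F ∈ entourages → RelComp E F ∈ entourages

namespace CoarseSpace

variable {X Y : Type}

/-- A gauge: a symmetric entourage containing the diagonal. -/
def IsGauge (C : CoarseSpace X) (E : Set (X × X)) : Prop :=
  E ∈ C.entourages ∧ RelTrans E = E ∧ {p : X × X | p.1 = p.2} ⊆ E

/-- The `E`-neighbourhood `E[A]` of a set `A`. -/
def nbhd (E : Set (X × X)) (A : Set X) : Set X := {x | ∃ a ∈ A, (x, a) ∈ E}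

/-- A set is bounded if `A × A` is contained in some entourage. -/
def IsBounded (C : CoarseSpace X) (A : Set X) : Prop := ∃ E ∈ C.entourages, A ×ˢ A ⊆ E

/-- `A ≺ B` : `A` is subordinate to `B`. -/
def Subordinate (C : CoarseSpace X) (A B : Set X) : Prop := ∃ E ∈ C.entourages, A ⊆ nbhd E B

/-- `A ≍ B` : asymptotic equivalence of subsets. -/
def Asymptotic (C : CoarseSpace X) (A B : Set X) : Prop :=
  C.Subordinate A B ∧ C.Subordinate B A

/-- A coarse map between coarse spaces. -/
def IsCoarseMap (CX : CoarseSpace X) (CY : CoarseSpace Y) (f : X → Y) : Prop :=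
  ∀ E ∈ CX.entourages, (fun p : X × X => (f p.1, f p.2)) '' E ∈ CY.entourages

/-- Two maps are close. -/
def Close (CX : CoarseSpace X) (CY : CoarseSpace Y) (f g : X → Y) : Prop :=
  ∀ E ∈ CX.entourages, (fun p : X × X => (f p.1, g p.2)) '' E ∈ CY.entourages

/-- A coarse equivalence (of maps). -/
def IsCoarseEquivMap (CX : CoarseSpace X) (CY : CoarseSpace Y) (f : X → Y) : Prop :=
  IsCoarseMap CX CY f ∧ ∃ g : Y → X, IsCoarseMap CY CX g ∧
    Close CY CY (f ∘ g) id ∧ Close CX CX (g ∘ f) id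

/-- A coarse embedding: a coarse map which is in addition expansive (equivalently, a coarse
equivalence onto its image with the subspace coarse structure). -/
def IsCoarseEmbedding (CX : CoarseSpace X) (CY : CoarseSpace Y) (f : X → Y) : Prop :=
  IsCoarseMap CX CY f ∧
    ∀ F ∈ CY.entourages, {p : X × X | (f p.1, f p.2) ∈ F} ∈ CX.entourages

/-- A coarse structure is countably generated if it is the smallest coarse structure
containing some countable family of subsets of `X × X`. -/
def IsCountablyGenerated (C : CoarseSpace X) : Prop :=
  ∃ G : Set (Set (X × X)), G.Countable ∧ G ⊆ C.entourages ∧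
    ∀ C' : CoarseSpace X, G ⊆ C'.entourages → C.entourages ⊆ C'.entourages

end CoarseSpace

/-- Subordination of relations `R₁, R₂ ⊆ Y × X` with respect to the product coarse structure. -/
def RelSub {X Y : Type} (CX : CoarseSpace X) (CY : CoarseSpace Y)
    (R₁ R₂ : Set (Y × X)) : Prop :=
  ∃ F ∈ CY.entourages, ∃ E ∈ CX.entourages,
    ∀ p ∈ R₁, ∃ q ∈ R₂, (p.1, q.1) ∈ F ∧ (p.2, q.2) ∈ E

/-- Asymptotic equivalence of relations `R₁, R₂ ⊆ Y × X`. -/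
def RelAsymp {X Y : Type} (CX : CoarseSpace X) (CY : CoarseSpace Y)
    (R₁ R₂ : Set (Y × X)) : Prop :=
  RelSub CX CY R₁ R₂ ∧ RelSub CX CY R₂ R₁

/-! ## LFCM spaces -/

/-- A discrete partition of a coarse space endowed with a Boolean algebra `meas` of subsets:
a measurable, locally finite, controlled partition `P` such that a set is measurable iff its
intersection with every block is measurable. -/
structure IsDiscretePartition {X : Type} (C : CoarseSpace X) (meas : Set (Set X))
    (P : Set (Set X)) : Prop where
  nonempty : ∀ A ∈ P, A.Nonempty
  pairwiseDisjoint : ∀ A ∈ P, ∀ B ∈ P, A ≠ B → Disjoint A B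
  covers : ⋃₀ P = Set.univ
  measurable : P ⊆ meas
  locallyFinite : ∀ B : Set X, C.IsBounded B → {A | A ∈ P ∧ (A ∩ B).Nonempty}.Finite
  controlled : ∃ E, C.IsGauge E ∧ ∀ A ∈ P, A ×ˢ A ⊆ E
  meas_iff : ∀ B : Set X, B ∈ meas ↔ ∀ A ∈ P, B ∩ A ∈ meas

/-- A locally finite coarse measurable (LFCM) space: a coarse space together with a Boolean
algebra of subsets admitting a discrete partition (a chosen one is part of the data). -/
structure LFCMSpace (X : Type) where
  coarse : CoarseSpace X
  meas : Set (Set X)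
  empty_mem : ∅ ∈ meas
  compl_mem : ∀ {A : Set X}, A ∈ meas → Aᶜ ∈ meas
  union_mem : ∀ {A B : Set X}, A ∈ meas → B ∈ meas → A ∪ B ∈ meas
  partition : Set (Set X)
  isPartition : IsDiscretePartition coarse meas partition

namespace LFCMSpace

variable {X Y : Type}

/-- The discreteness gauge `E_disc = ⊔_{A ∈ P} A × A` of an LFCM space. -/
def disc (𝒳 : LFCMSpace X) : Set (X × X) := ⋃ A ∈ 𝒳.partition, A ×ˢ A

/-- A discreteness gauge: a gauge bounding the blocks of some discrete partition. -/
def IsDiscretenessGauge (𝒳 : LFCMSpace X) (E : Set (X × X)) : Prop :=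
  𝒳.coarse.IsGauge E ∧
    ∃ P, IsDiscretePartition 𝒳.coarse 𝒳.meas P ∧ ∀ A ∈ P, A ×ˢ A ⊆ E

end LFCMSpace

/-- A coarse measurable map between LFCM spaces. -/
def IsCoarseMeasurableMap {X Y : Type} (𝒳 : LFCMSpace X) (𝒴 : LFCMSpace Y) (f : X → Y) : Prop :=
  CoarseSpace.IsCoarseMap 𝒳.coarse 𝒴.coarse f ∧ ∀ B ∈ 𝒴.meas, f ⁻¹' B ∈ 𝒳.meas

/-! ## Coarse geometric modules -/

/-- A coarse geometric module over an LFCM space `𝒳`: a representation of the Boolean algebra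
of measurable sets by orthogonal projections on a complex Hilbert space, nondegenerate on
bounded sets. -/
structure CoarseModule {X : Type} (𝒳 : LFCMSpace X) (H : Type) [NormedAddCommGroup H]
    [InnerProductSpace ℂ H] [CompleteSpace H] where
  proj : Set X → (H →L[ℂ] H)
  proj_empty : proj ∅ = 0
  proj_selfAdjoint : ∀ A ∈ 𝒳.meas, IsSelfAdjoint (proj A)
  proj_inter : ∀ {A B : Set X}, A ∈ 𝒳.meas → B ∈ 𝒳.meas → proj (A ∩ B) = proj A ∘L proj B
  proj_union : ∀ {A B : Set X}, A ∈ 𝒳.meas → B ∈ 𝒳.meas → Disjoint A B →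
      proj (A ∪ B) = proj A + proj B
  nondeg : Dense (↑(Submodule.span ℂ
      (⋃ A ∈ {A | A ∈ 𝒳.meas ∧ 𝒳.coarse.IsBounded A}, Set.range (proj A))) : Set H)

variable {X Y Z : Type}
variable {H₀ H₁ H₂ H₃ : Type}

/-- The support of a bounded operator between Hilbert spaces carrying representations
`pX`, `pY` of the measurable sets of LFCM spaces `𝒳` (source) and `𝒴` (target). -/
def opSupp [NormedAddCommGroup H₁] [InnerProductSpace ℂ H₁]
    [NormedAddCommGroup H₂] [InnerProductSpace ℂ H₂]
    (𝒳 : LFCMSpace X) (𝒴 : LFCMSpace Y)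
    (pX : Set X → (H₁ →L[ℂ] H₁)) (pY : Set Y → (H₂ →L[ℂ] H₂))
    (t : H₁ →L[ℂ] H₂) : Set (Y × X) :=
  ⋃₀ {S | ∃ B A, S = B ×ˢ A ∧ B ∈ 𝒴.meas ∧ B ×ˢ B ⊆ 𝒴.disc ∧
      A ∈ 𝒳.meas ∧ A ×ˢ A ⊆ 𝒳.disc ∧ pY B ∘L t ∘L pX A ≠ 0}

/-- Controlled propagation of an operator between modules over the same LFCM space. -/
def HasControlledPropagation [NormedAddCommGroup H₁] [InnerProductSpace ℂ H₁]
    [NormedAddCommGroup H₂] [InnerProductSpace ℂ H₂]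
    (𝒳 : LFCMSpace X) (pX : Set X → (H₁ →L[ℂ] H₁)) (pY : Set X → (H₂ →L[ℂ] H₂))
    (t : H₁ →L[ℂ] H₂) : Prop :=
  opSupp 𝒳 𝒳 pX pY t ∈ 𝒳.coarse.entourages

/-- Approximable operators: norm-limits of controlled propagation operators. -/
def Approximable [NormedAddCommGroup H₁] [InnerProductSpace ℂ H₁]
    [NormedAddCommGroup H₂] [InnerProductSpace ℂ H₂]
    (𝒳 : LFCMSpace X) (pX : Set X → (H₁ →L[ℂ] H₁)) (pY : Set X → (H₂ →L[ℂ] H₂))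
    (t : H₁ →L[ℂ] H₂) : Prop :=
  ∀ ε : ℝ, 0 < ε → ∃ s : H₁ →L[ℂ] H₂, HasControlledPropagation 𝒳 pX pY s ∧ ‖t - s‖ ≤ ε

/-- The rank (Hilbert dimension of the range) of an operator. -/
def projRank {H : Type} [NormedAddCommGroup H] [InnerProductSpace ℂ H]
    (p : H →L[ℂ] H) : Cardinal :=
  LinearMap.rank (p : H →ₗ[ℂ] H)

/-- The `κ`-domain of a coarse module, computed with respect to an arbitrary gauge `E`. -/
def domKappaAt {X : Type} {H : Type} [NormedAddCommGroup H] [InnerProductSpace ℂ H]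
    [CompleteSpace H] (𝒳 : LFCMSpace X) (M : CoarseModule 𝒳 H) (E : Set (X × X))
    (κ : Cardinal) : Set X :=
  ⋃₀ {A | A ∈ 𝒳.meas ∧ A ×ˢ A ⊆ E ∧ κ ≤ projRank (M.proj A)}

/-- The `κ`-domain of a coarse module (with respect to the discreteness gauge). -/
def domKappa {X : Type} {H : Type} [NormedAddCommGroup H] [InnerProductSpace ℂ H]
    [CompleteSpace H] (𝒳 : LFCMSpace X) (M : CoarseModule 𝒳 H) (κ : Cardinal) : Set X :=
  domKappaAt 𝒳 M 𝒳.disc κ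

/-- A coarse module is faithful if its faithfulness domain is asymptotic to the whole space. -/
def IsFaithfulMod {X : Type} {H : Type} [NormedAddCommGroup H] [InnerProductSpace ℂ H]
    [CompleteSpace H] (𝒳 : LFCMSpace X) (M : CoarseModule 𝒳 H) : Prop :=
  𝒳.coarse.Asymptotic (domKappa 𝒳 M 1) Set.univ

/-- A coarse module is ample if its ampleness domain is asymptotic to the whole space. -/
def IsAmpleMod {X : Type} {H : Type} [NormedAddCommGroup H] [InnerProductSpace ℂ H]
    [CompleteSpace H] (𝒳 : LFCMSpace X) (M : CoarseModule 𝒳 H) : Prop :=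
  𝒳.coarse.Asymptotic (domKappa 𝒳 M Cardinal.aleph0) Set.univ

/-- The approximate relation `f^T_{δ,F,E}` of a bounded operator. -/
def approxRel [NormedAddCommGroup H₁] [InnerProductSpace ℂ H₁]
    [NormedAddCommGroup H₂] [InnerProductSpace ℂ H₂]
    (𝒳 : LFCMSpace X) (𝒴 : LFCMSpace Y)
    (pX : Set X → (H₁ →L[ℂ] H₁)) (pY : Set Y → (H₂ →L[ℂ] H₂))
    (T : H₁ →L[ℂ] H₂) (δ : ℝ) (F : Set (Y × Y)) (E : Set (X × X)) : Set (Y × X) :=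
  ⋃₀ {S | ∃ B A, S = B ×ˢ A ∧ B ∈ 𝒴.meas ∧ B ×ˢ B ⊆ F ∧
      A ∈ 𝒳.meas ∧ A ×ˢ A ⊆ E ∧ δ < ‖pY B ∘L T ∘L pX A‖}

/-- A unitary operator between Hilbert spaces. -/
def IsUnitaryOp [NormedAddCommGroup H₁] [InnerProductSpace ℂ H₁] [CompleteSpace H₁]
    [NormedAddCommGroup H₂] [InnerProductSpace ℂ H₂] [CompleteSpace H₂]
    (U : H₁ →L[ℂ] H₂) : Prop :=
  ContinuousLinearMap.adjoint U ∘L U = ContinuousLinearMap.id ℂ H₁ ∧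
    U ∘L ContinuousLinearMap.adjoint U = ContinuousLinearMap.id ℂ H₂

/-- A central unitary of the C*-algebra of approximable operators on a coarse module. -/
def IsCentralUnitary {X : Type} {H : Type} [NormedAddCommGroup H] [InnerProductSpace ℂ H]
    [CompleteSpace H] (𝒳 : LFCMSpace X) (M : CoarseModule 𝒳 H) (u : H →L[ℂ] H) : Prop :=
  Approximable 𝒳 M.proj M.proj u ∧ IsUnitaryOp u ∧
    ∀ t : H →L[ℂ] H, Approximable 𝒳 M.proj M.proj t → u ∘L t = t ∘L u

/-- Equivalence of operators modulo central unitaries. -/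
def CongruentModCentral {X : Type} [NormedAddCommGroup H₁] [InnerProductSpace ℂ H₁]
    [CompleteSpace H₁] [NormedAddCommGroup H₂] [InnerProductSpace ℂ H₂] [CompleteSpace H₂]
    (𝒳 : LFCMSpace X) (C : CoarseModule 𝒳 H₁) (D : CoarseModule 𝒳 H₂)
    (t s : H₁ →L[ℂ] H₂) : Prop :=
  ∃ u v, IsCentralUnitary 𝒳 C u ∧ IsCentralUnitary 𝒳 D v ∧ t = v ∘L s ∘L u

/-! ## Direct sums of modules -/

/-- The direct sum `T ⊕ S` of two operators, on the `ℓ²`-product of Hilbert spaces. -/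
def prodOp [NormedAddCommGroup H₀] [InnerProductSpace ℂ H₀]
    [NormedAddCommGroup H₁] [InnerProductSpace ℂ H₁]
    [NormedAddCommGroup H₂] [InnerProductSpace ℂ H₂]
    [NormedAddCommGroup H₃] [InnerProductSpace ℂ H₃]
    (T : H₀ →L[ℂ] H₂) (S : H₁ →L[ℂ] H₃) :
    WithLp 2 (H₀ × H₁) →L[ℂ] WithLp 2 (H₂ × H₃) :=
  (WithLp.prodContinuousLinearEquiv 2 ℂ H₂ H₃).symm.toContinuousLinearMap ∘L
    (T.prodMap S) ∘L (WithLp.prodContinuousLinearEquiv 2 ℂ H₀ H₁).toContinuousLinearMap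

/-- The canonical inclusion `H₀ → H₀ ⊕ H₁`. -/
def inlOp (H₀ H₁ : Type) [NormedAddCommGroup H₀] [InnerProductSpace ℂ H₀]
    [NormedAddCommGroup H₁] [InnerProductSpace ℂ H₁] :
    H₀ →L[ℂ] WithLp 2 (H₀ × H₁) :=
  (WithLp.prodContinuousLinearEquiv 2 ℂ H₀ H₁).symm.toContinuousLinearMap ∘L
    ContinuousLinearMap.inl ℂ H₀ H₁

/-- The canonical inclusion `H₁ → H₀ ⊕ H₁`. -/
def inrOp (H₀ H₁ : Type) [NormedAddCommGroup H₀] [InnerProductSpace ℂ H₀]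
    [NormedAddCommGroup H₁] [InnerProductSpace ℂ H₁] :
    H₁ →L[ℂ] WithLp 2 (H₀ × H₁) :=
  (WithLp.prodContinuousLinearEquiv 2 ℂ H₀ H₁).symm.toContinuousLinearMap ∘L
    ContinuousLinearMap.inr ℂ H₀ H₁

/-- The canonical projection `H₀ ⊕ H₁ → H₀`. -/
def fstOp (H₀ H₁ : Type) [NormedAddCommGroup H₀] [InnerProductSpace ℂ H₀]
    [NormedAddCommGroup H₁] [InnerProductSpace ℂ H₁] :
    WithLp 2 (H₀ × H₁) →L[ℂ] H₀ :=
  ContinuousLinearMap.fst ℂ H₀ H₁ ∘L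
    (WithLp.prodContinuousLinearEquiv 2 ℂ H₀ H₁).toContinuousLinearMap

/-- The canonical projection `H₀ ⊕ H₁ → H₁`. -/
def sndOp (H₀ H₁ : Type) [NormedAddCommGroup H₀] [InnerProductSpace ℂ H₀]
    [NormedAddCommGroup H₁] [InnerProductSpace ℂ H₁] :
    WithLp 2 (H₀ × H₁) →L[ℂ] H₁ :=
  ContinuousLinearMap.snd ℂ H₀ H₁ ∘L
    (WithLp.prodContinuousLinearEquiv 2 ℂ H₀ H₁).toContinuousLinearMap

/-- `M` is the direct sum of the coarse modules `C₀` and `C₁`. -/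
def IsDirectSum {X : Type} [NormedAddCommGroup H₀] [InnerProductSpace ℂ H₀] [CompleteSpace H₀]
    [NormedAddCommGroup H₁] [InnerProductSpace ℂ H₁] [CompleteSpace H₁]
    (𝒳 : LFCMSpace X) (C₀ : CoarseModule 𝒳 H₀) (C₁ : CoarseModule 𝒳 H₁)
    (M : CoarseModule 𝒳 (WithLp 2 (H₀ × H₁))) : Prop :=
  ∀ A : Set X, M.proj A = prodOp (C₀.proj A) (C₁.proj A)

/-! ## Bundled modules and *-functors -/

/-- A coarse module over `𝒳` bundled together with its Hilbert space; the objects of the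
approximable category `𝒜(𝒳)`. -/
structure BundledModule {X : Type} (𝒳 : LFCMSpace X) where
  H : Type
  [instNorm : NormedAddCommGroup H]
  [instInner : InnerProductSpace ℂ H]
  [instComplete : CompleteSpace H]
  mod : CoarseModule 𝒳 H

attribute [instance] BundledModule.instNorm BundledModule.instInner BundledModule.instComplete

/-- A *-functor `𝒜(𝒳) → 𝒜(𝒴)` between approximable categories: a map on objects together
with a ℂ-linear, multiplicative, adjoint-preserving map on approximable operators. -/
structure StarFunctor {X Y : Type} (𝒳 : LFCMSpace X) (𝒴 : LFCMSpace Y) where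
  obj : BundledModule 𝒳 → BundledModule 𝒴
  map : ∀ {C D : BundledModule 𝒳} (t : C.H →L[ℂ] D.H),
      Approximable 𝒳 C.mod.proj D.mod.proj t → ((obj C).H →L[ℂ] (obj D).H)
  map_approximable : ∀ {C D : BundledModule 𝒳} (t : C.H →L[ℂ] D.H)
      (ht : Approximable 𝒳 C.mod.proj D.mod.proj t),
      Approximable 𝒴 (obj C).mod.proj (obj D).mod.proj (map t ht)
  map_id : ∀ (C : BundledModule 𝒳)
      (h : Approximable 𝒳 C.mod.proj C.mod.proj (ContinuousLinearMap.id ℂ C.H)),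
      map (ContinuousLinearMap.id ℂ C.H) h = ContinuousLinearMap.id ℂ (obj C).H
  map_comp : ∀ {C D G : BundledModule 𝒳} (t : C.H →L[ℂ] D.H) (s : D.H →L[ℂ] G.H)
      (ht : Approximable 𝒳 C.mod.proj D.mod.proj t)
      (hs : Approximable 𝒳 D.mod.proj G.mod.proj s)
      (hst : Approximable 𝒳 C.mod.proj G.mod.proj (s ∘L t)),
      map (s ∘L t) hst = map s hs ∘L map t ht
  map_add : ∀ {C D : BundledModule 𝒳} (t s : C.H →L[ℂ] D.H)
      (ht : Approximable 𝒳 C.mod.proj D.mod.proj t)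
      (hs : Approximable 𝒳 C.mod.proj D.mod.proj s)
      (hts : Approximable 𝒳 C.mod.proj D.mod.proj (t + s)),
      map (t + s) hts = map t ht + map s hs
  map_smul : ∀ {C D : BundledModule 𝒳} (c : ℂ) (t : C.H →L[ℂ] D.H)
      (ht : Approximable 𝒳 C.mod.proj D.mod.proj t)
      (hct : Approximable 𝒳 C.mod.proj D.mod.proj (c • t)),
      map (c • t) hct = c • map t ht
  map_star : ∀ {C D : BundledModule 𝒳} (t : C.H →L[ℂ] D.H)
      (ht : Approximable 𝒳 C.mod.proj D.mod.proj t)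
      (hstar : Approximable 𝒳 D.mod.proj C.mod.proj (ContinuousLinearMap.adjoint t)),
      map (ContinuousLinearMap.adjoint t) hstar = ContinuousLinearMap.adjoint (map t ht)

namespace StarFunctor

variable {𝒳 : LFCMSpace X} {𝒴 : LFCMSpace Y}

/-- A full functor. -/
def Full (F : StarFunctor 𝒳 𝒴) : Prop :=
  ∀ (C D : BundledModule 𝒳) (s : (F.obj C).H →L[ℂ] (F.obj D).H),
    Approximable 𝒴 (F.obj C).mod.proj (F.obj D).mod.proj s →
    ∃ (t : C.H →L[ℂ] D.H) (ht : Approximable 𝒳 C.mod.proj D.mod.proj t), F.map t ht = s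

/-- A faithful functor. -/
def Faithful (F : StarFunctor 𝒳 𝒴) : Prop :=
  ∀ (C D : BundledModule 𝒳) (t t' : C.H →L[ℂ] D.H)
    (ht : Approximable 𝒳 C.mod.proj D.mod.proj t)
    (ht' : Approximable 𝒳 C.mod.proj D.mod.proj t'),
    F.map t ht = F.map t' ht' → t = t'

/-- An essentially surjective functor (up to isomorphism in the approximable category). -/
def EssSurj (F : StarFunctor 𝒳 𝒴) : Prop :=
  ∀ D' : BundledModule 𝒴, ∃ C : BundledModule 𝒳,
    ∃ u : (F.obj C).H →L[ℂ] D'.H, Approximable 𝒴 (F.obj C).mod.proj D'.mod.proj u ∧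
    ∃ v : D'.H →L[ℂ] (F.obj C).H, Approximable 𝒴 D'.mod.proj (F.obj C).mod.proj v ∧
      v ∘L u = ContinuousLinearMap.id ℂ (F.obj C).H ∧
      u ∘L v = ContinuousLinearMap.id ℂ D'.H

/-- A unitary `U` implements the *-isomorphism induced by `F` on the endomorphism algebra of
a module `C`. -/
def Implements (F : StarFunctor 𝒳 𝒴) (C : BundledModule 𝒳)
    (U : C.H →L[ℂ] (F.obj C).H) : Prop :=
  IsUnitaryOp U ∧ ∀ (t : C.H →L[ℂ] C.H) (ht : Approximable 𝒳 C.mod.proj C.mod.proj t),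
    F.map t ht = U ∘L t ∘L ContinuousLinearMap.adjoint U

end StarFunctor

/-- The graph of a map, as a relation `⊆ Y × X`. -/
def mapGraph {X Y : Type} (f : X → Y) : Set (Y × X) := {p | p.1 = f p.2}

/-- A relation `R ⊆ Y × X` is a coarse equivalence from `DX ⊆ X` to `DY ⊆ Y` (each with the
subspace coarse structure): controlled in both directions, densely defined and coarsely
surjective relative to `DX` and `DY`. -/
def IsRelCoarseEquivOn {X Y : Type} (CX : CoarseSpace X) (CY : CoarseSpace Y)
    (DX : Set X) (DY : Set Y) (R : Set (Y × X)) : Prop :=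
  (∀ E ∈ CX.entourages, RelComp R (RelComp E (RelTrans R)) ∈ CY.entourages) ∧
  (∀ F ∈ CY.entourages, RelComp (RelTrans R) (RelComp F R) ∈ CX.entourages) ∧
  CX.Asymptotic (Prod.snd '' R) DX ∧ CY.Asymptotic (Prod.fst '' R) DY

/-- `S ⊆ X × Y` is a coarse inverse of the relation `R ⊆ Y × X` between `DX` and `DY`:
both compositions are asymptotic to the respective (restricted) diagonals. -/
def IsRelCoarseInverseOn {X Y : Type} (CX : CoarseSpace X) (CY : CoarseSpace Y)
    (DX : Set X) (DY : Set Y) (R : Set (Y × X)) (S : Set (X × Y)) : Prop :=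
  RelAsymp CX CX (RelComp S R) {p : X × X | p.1 = p.2 ∧ p.1 ∈ DX} ∧
  RelAsymp CY CY (RelComp R S) {p : Y × Y | p.1 = p.2 ∧ p.1 ∈ DY}

/-- The statement that a coarse map `f` represents the coarse embedding induced by a full and
faithful *-functor `F` via approximate relations of implementing unitaries. -/
def RepresentsInducedEmbedding {X Y : Type} {𝒳 : LFCMSpace X} {𝒴 : LFCMSpace Y}
    (F : StarFunctor 𝒳 𝒴) (f : X → Y) : Prop :=
  ∀ (C : BundledModule 𝒳), IsFaithfulMod 𝒳 C.mod →
  ∀ (U : C.H →L[ℂ] (F.obj C).H), F.Implements C U →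
  ∀ δ : ℝ, 0 < δ → δ < 1 →
  ∃ F₀ ∈ 𝒴.coarse.entourages, ∃ E₀ ∈ 𝒳.coarse.entourages,
    ∀ F' ∈ 𝒴.coarse.entourages, F₀ ⊆ F' → ∀ E ∈ 𝒳.coarse.entourages, E₀ ⊆ E →
      RelAsymp 𝒳.coarse 𝒴.coarse
        (approxRel 𝒳 𝒴 C.mod.proj (F.obj C).mod.proj U δ F' E) (mapGraph f)

/-- Bundle a coarse module into an object of the approximable category. -/
abbrev BundledModule.ofModule {X : Type} {𝒳 : LFCMSpace X} {H : Type} [NormedAddCommGroup H]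
    [InnerProductSpace ℂ H] [CompleteSpace H] (M : CoarseModule 𝒳 H) : BundledModule 𝒳 :=
  ⟨H, M⟩

theorem LFCMSpace.disc_mem {X : Type} (𝒳 : LFCMSpace X) :
    𝒳.disc ∈ 𝒳.coarse.entourages := by
  obtain ⟨E, hE, hEP⟩ := 𝒳.isPartition.controlled
  refine 𝒳.coarse.mem_of_subset hE.1 ?_
  intro p hp
  simp only [LFCMSpace.disc, Set.mem_iUnion] at hp
  obtain ⟨A, hA, hpA⟩ := hp
  exact hEP A hA hpA

theorem prodOp_comp_inlOp {H₀ H₁ H₂ H₃ : Type}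
    [NormedAddCommGroup H₀] [InnerProductSpace ℂ H₀]
    [NormedAddCommGroup H₁] [InnerProductSpace ℂ H₁]
    [NormedAddCommGroup H₂] [InnerProductSpace ℂ H₂]
    [NormedAddCommGroup H₃] [InnerProductSpace ℂ H₃]
    (T : H₀ →L[ℂ] H₂) (S : H₁ →L[ℂ] H₃) :
    prodOp T S ∘L inlOp H₀ H₁ = inlOp H₂ H₃ ∘L T := by
  ext x
  simp [prodOp, inlOp]

theorem prodOp_comp_inrOp {H₀ H₁ H₂ H₃ : Type}
    [NormedAddCommGroup H₀] [InnerProductSpace ℂ H₀]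
    [NormedAddCommGroup H₁] [InnerProductSpace ℂ H₁]
    [NormedAddCommGroup H₂] [InnerProductSpace ℂ H₂]
    [NormedAddCommGroup H₃] [InnerProductSpace ℂ H₃]
    (T : H₀ →L[ℂ] H₂) (S : H₁ →L[ℂ] H₃) :
    prodOp T S ∘L inrOp H₀ H₁ = inrOp H₂ H₃ ∘L S := by
  ext x
  simp [prodOp, inrOp]

/-- The canonical inclusion into a direct sum of coarse modules is approximable
(indeed it has controlled propagation). -/
theorem IsDirectSum.approximable_inl {X : Type} {H₀ H₁ : Type}
    [NormedAddCommGroup H₀] [InnerProductSpace ℂ H₀] [CompleteSpace H₀]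
    [NormedAddCommGroup H₁] [InnerProductSpace ℂ H₁] [CompleteSpace H₁]
    {𝒳 : LFCMSpace X} {C₀ : CoarseModule 𝒳 H₀} {C₁ : CoarseModule 𝒳 H₁}
    {M : CoarseModule 𝒳 (WithLp 2 (H₀ × H₁))} (hM : IsDirectSum 𝒳 C₀ C₁ M) :
    Approximable 𝒳 C₀.proj M.proj (inlOp H₀ H₁) := by
  intro ε hε
  refine ⟨inlOp H₀ H₁, ?_, by simp [hε.le]⟩
  refine 𝒳.coarse.mem_of_subset (𝒳.coarse.comp_mem 𝒳.disc_mem 𝒳.disc_mem) ?_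
  rintro ⟨y, x⟩ hyx
  obtain ⟨s, ⟨B, A, rfl, hBmeas, hBb, hAmeas, hAb, hne⟩, hmem⟩ := hyx
  have key : M.proj B ∘L inlOp H₀ H₁ ∘L C₀.proj A
      = inlOp H₀ H₁ ∘L C₀.proj (B ∩ A) := by
    rw [C₀.proj_inter hBmeas hAmeas, hM B, ← ContinuousLinearMap.comp_assoc,
      prodOp_comp_inlOp, ContinuousLinearMap.comp_assoc]
  have hBA : (B ∩ A).Nonempty := by
    by_contra h
    rw [Set.not_nonempty_iff_eq_empty] at h
    apply hne
    rw [key, h, C₀.proj_empty]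
    ext z
    simp
  obtain ⟨z, hzB, hzA⟩ := hBA
  obtain ⟨hyB, hxA⟩ := hmem
  exact ⟨z, hBb ⟨hyB, hzB⟩, hAb ⟨hzA, hxA⟩⟩

theorem IsDirectSum.approximable_inr {X : Type} {H₀ H₁ : Type}
    [NormedAddCommGroup H₀] [InnerProductSpace ℂ H₀] [CompleteSpace H₀]
    [NormedAddCommGroup H₁] [InnerProductSpace ℂ H₁] [CompleteSpace H₁]
    {𝒳 : LFCMSpace X} {C₀ : CoarseModule 𝒳 H₀} {C₁ : CoarseModule 𝒳 H₁}
    {M : CoarseModule 𝒳 (WithLp 2 (H₀ × H₁))} (hM : IsDirectSum 𝒳 C₀ C₁ M) :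
    Approximable 𝒳 C₁.proj M.proj (inrOp H₀ H₁) := by
  intro ε hε
  refine ⟨inrOp H₀ H₁, ?_, by simp [hε.le]⟩
  refine 𝒳.coarse.mem_of_subset (𝒳.coarse.comp_mem 𝒳.disc_mem 𝒳.disc_mem) ?_
  rintro ⟨y, x⟩ hyx
  obtain ⟨s, ⟨B, A, rfl, hBmeas, hBb, hAmeas, hAb, hne⟩, hmem⟩ := hyx
  have key : M.proj B ∘L inrOp H₀ H₁ ∘L C₁.proj A
      = inrOp H₀ H₁ ∘L C₁.proj (B ∩ A) := by
    rw [C₁.proj_inter hBmeas hAmeas, hM B, ← ContinuousLinearMap.comp_assoc,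
      prodOp_comp_inrOp, ContinuousLinearMap.comp_assoc]
  have hBA : (B ∩ A).Nonempty := by
    by_contra h
    rw [Set.not_nonempty_iff_eq_empty] at h
    apply hne
    rw [key, h, C₁.proj_empty]
    ext z
    simp
  obtain ⟨z, hzB, hzA⟩ := hBA
  obtain ⟨hyB, hxA⟩ := hmem
  exact ⟨z, hBb ⟨hyB, hzB⟩, hAb ⟨hzA, hxA⟩⟩

/-- Any coarse map between LFCM spaces is close to a coarse measurable map. -/
theorem exists_coarseMeasurableMap_close {X Y : Type} (𝒳 : LFCMSpace X) (𝒴 : LFCMSpace Y)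
    (f : X → Y) (hf : CoarseSpace.IsCoarseMap 𝒳.coarse 𝒴.coarse f) :
    ∃ g : X → Y, IsCoarseMeasurableMap 𝒳 𝒴 g ∧
      CoarseSpace.Close 𝒳.coarse 𝒴.coarse f g := by
  classical
  cases isEmpty_or_nonempty X with
  | inl hX =>
    refine ⟨f, ⟨hf, fun B _ => ?_⟩, hf⟩
    have : f ⁻¹' B = ∅ := Set.eq_empty_of_isEmpty _
    rw [this]; exact 𝒳.empty_mem
  | inr hX =>
    obtain ⟨EG, hEG, hEGP⟩ := 𝒳.isPartition.controlled
    have hcov : ∀ x : X, ∃ A ∈ 𝒳.partition, x ∈ A := by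
      intro x
      have h := 𝒳.isPartition.covers
      rw [Set.sUnion_eq_univ_iff] at h
      exact h x
    choose A0 hA0P hA0mem using hcov
    set pt : Set X → X := fun A => if h : A.Nonempty then h.choose else Classical.arbitrary X
      with hptdef
    set r : X → X := fun x => pt (A0 x) with hrdef
    have hptmem : ∀ A : Set X, ∀ h : A.Nonempty, pt A ∈ A := by
      intro A h
      simp only [hptdef, dif_pos h]
      exact h.choose_spec
    have hrmem : ∀ x, r x ∈ A0 x := fun x => hptmem (A0 x) ⟨x, hA0mem x⟩
    have hunique : ∀ x A, A ∈ 𝒳.partition → x ∈ A → A0 x = A := by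
      intro x A hA hx
      by_contra hne
      exact Set.disjoint_left.mp
        (𝒳.isPartition.pairwiseDisjoint _ (hA0P x) A hA hne) (hA0mem x) hx
    have hrE : ∀ x, (r x, x) ∈ EG := fun x => hEGP _ (hA0P x) ⟨hrmem x, hA0mem x⟩
    have hrE' : ∀ x, (x, r x) ∈ EG := by
      intro x
      rw [← hEG.2.1]
      exact hrE x
    refine ⟨f ∘ r, ⟨?_, ?_⟩, ?_⟩
    · -- coarse
      intro E hE
      have hcomp : RelComp EG (RelComp E EG) ∈ 𝒳.coarse.entourages :=
        𝒳.coarse.comp_mem hEG.1 (𝒳.coarse.comp_mem hE hEG.1)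
      refine 𝒴.coarse.mem_of_subset (hf _ hcomp) ?_
      rintro ⟨y1, y2⟩ ⟨⟨x1, x2⟩, hp, heq⟩
      exact ⟨(r x1, r x2), ⟨x1, hrE x1, x2, hp, hrE' x2⟩, heq⟩
    · -- measurable
      intro B _
      rw [𝒳.isPartition.meas_iff]
      intro A hA
      have hconst : ∀ x ∈ A, (f ∘ r) x = f (pt A) := by
        intro x hx
        show f (pt (A0 x)) = f (pt A)
        rw [hunique x A hA hx]
      by_cases hc : f (pt A) ∈ B
      · have hAeq : (f ∘ r) ⁻¹' B ∩ A = A := by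
          ext x
          constructor
          · exact fun h => h.2
          · intro hx
            refine ⟨?_, hx⟩
            show (f ∘ r) x ∈ B
            rw [hconst x hx]
            exact hc
        rw [hAeq]
        exact 𝒳.isPartition.measurable hA
      · have hAeq : (f ∘ r) ⁻¹' B ∩ A = ∅ := by
          ext x
          simp only [Set.mem_inter_iff, Set.mem_preimage, Set.mem_empty_iff_false, iff_false,
            not_and]
          intro hB' hx
          exact hc (by rwa [hconst x hx] at hB')
        rw [hAeq]
        exact 𝒳.empty_mem
    · -- close
      intro E hE
      have hcomp : RelComp E EG ∈ 𝒳.coarse.entourages := 𝒳.coarse.comp_mem hE hEG.1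
      refine 𝒴.coarse.mem_of_subset (hf _ hcomp) ?_
      rintro ⟨y1, y2⟩ ⟨⟨x1, x2⟩, hp, heq⟩
      exact ⟨(x1, r x2), ⟨x2, hp, hrE' x2⟩, heq⟩
end
end

section
/- Let 𝒳 and 𝒴 be LFCM spaces, f : 𝒳 → 𝒴 a coarse measurable map, and C a coarse 𝒳-module. Then the representation of 𝔄^Y on H_C defined by 1^{f_*C}_A = 1^C_{f⁻¹(A)} is non-degenerate, i.e. the span of {1^C_{f⁻¹(B)} H_C : B ∈ 𝔄^Y bounded} is dense in H_C; consequently it defines a coarse 𝒴-module f_*C (the pushforward of C along f). -/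
noncomputable section

open scoped ENNReal

variable {X Y Z : Type}
variable {H₀ H₁ H₂ H₃ : Type}

/-! Every bounded measurable `A ⊆ X` lies in `f⁻¹ B`, where `B` is the union of the (finitely
many) partition blocks of `𝒴` meeting the bounded set `f A`; then `1_A = 1_{f⁻¹ B} 1_A`, so the
span of the ranges of the `1_{f⁻¹ B}` contains the dense span of the ranges of the `1_A`. -/

theorem CoarseSpace.IsBounded.image {CX : CoarseSpace X} {CY : CoarseSpace Y} {f : X → Y}
    (hf : CoarseSpace.IsCoarseMap CX CY f) {A : Set X} (hA : CX.IsBounded A) :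
    CY.IsBounded (f '' A) := by
  obtain ⟨E, hE, hAE⟩ := hA
  refine ⟨_, hf E hE, ?_⟩
  rintro ⟨_, _⟩ ⟨⟨a, ha, rfl⟩, ⟨a', ha', rfl⟩⟩
  exact ⟨(a, a'), hAE ⟨ha, ha'⟩, rfl⟩

namespace LFCMSpace

variable (𝒴 : LFCMSpace Y)

theorem sUnion_mem {T : Set (Set Y)} (hT : T.Finite) (h : T ⊆ 𝒴.meas) : ⋃₀ T ∈ 𝒴.meas := by
  induction T, hT using Set.Finite.induction_on with
  | empty => simpa using 𝒴.empty_mem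
  | insert _ _ ih =>
    rw [Set.insert_subset_iff] at h
    rw [Set.sUnion_insert]
    exact 𝒴.union_mem h.1 (ih h.2)

def saturation (S : Set Y) : Set Y := ⋃₀ {P | P ∈ 𝒴.partition ∧ (P ∩ S).Nonempty}

theorem subset_saturation (S : Set Y) : S ⊆ 𝒴.saturation S := by
  intro y hy
  obtain ⟨P, hP, hyP⟩ : y ∈ ⋃₀ 𝒴.partition := by rw [𝒴.isPartition.covers]; trivial
  exact ⟨P, ⟨hP, y, hyP, hy⟩, hyP⟩

variable {𝒴}

theorem saturation_mem {S : Set Y} (hS : 𝒴.coarse.IsBounded S) : 𝒴.saturation S ∈ 𝒴.meas :=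
  𝒴.sUnion_mem (𝒴.isPartition.locallyFinite S hS) fun _ hP => 𝒴.isPartition.measurable hP.1

theorem isBounded_saturation {S : Set Y} (hS : 𝒴.coarse.IsBounded S) :
    𝒴.coarse.IsBounded (𝒴.saturation S) := by
  obtain ⟨F, hF, hSF⟩ := hS
  refine ⟨RelComp 𝒴.disc (RelComp F 𝒴.disc),
    𝒴.coarse.comp_mem 𝒴.disc_mem (𝒴.coarse.comp_mem hF 𝒴.disc_mem), ?_⟩
  rintro ⟨y, y'⟩ ⟨⟨P, ⟨hP, s, hsP, hsS⟩, hyP⟩, ⟨P', ⟨hP', s', hs'P', hs'S⟩, hy'P'⟩⟩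
  exact ⟨s, Set.mem_biUnion hP ⟨hyP, hsP⟩, s', hSF ⟨hsS, hs'S⟩,
    Set.mem_biUnion hP' ⟨hs'P', hy'P'⟩⟩

end LFCMSpace

namespace CoarseModule

variable {H : Type} [NormedAddCommGroup H] [InnerProductSpace ℂ H] [CompleteSpace H]
  {𝒳 : LFCMSpace X} {𝒴 : LFCMSpace Y} (C : CoarseModule 𝒳 H)

theorem range_proj_mono {A B : Set X} (hA : A ∈ 𝒳.meas) (hB : B ∈ 𝒳.meas) (hAB : A ⊆ B) :
    Set.range (C.proj A) ⊆ Set.range (C.proj B) := by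
  rintro _ ⟨u, rfl⟩
  refine ⟨C.proj A u, ?_⟩
  rw [← ContinuousLinearMap.comp_apply, ← C.proj_inter hB hA,
    Set.inter_eq_self_of_subset_right hAB]

theorem dense_span_range_proj_preimage {f : X → Y} (hf : IsCoarseMeasurableMap 𝒳 𝒴 f) :
    Dense (↑(Submodule.span ℂ
        (⋃ B ∈ {B | B ∈ 𝒴.meas ∧ 𝒴.coarse.IsBounded B},
          Set.range (C.proj (f ⁻¹' B)))) : Set H) := by
  refine C.nondeg.mono (Submodule.span_mono (Set.iUnion₂_subset fun A ⟨hA, hAb⟩ => ?_))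
  have hfA : 𝒴.coarse.IsBounded (f '' A) := hAb.image hf.1
  let B := 𝒴.saturation (f '' A)
  have hB : B ∈ 𝒴.meas := LFCMSpace.saturation_mem hfA
  have hAB : A ⊆ f ⁻¹' B :=
    Set.image_subset_iff.mp (𝒴.subset_saturation (f '' A))
  exact (C.range_proj_mono hA (hf.2 B hB) hAB).trans
    (Set.subset_biUnion_of_mem (u := fun B => Set.range (C.proj (f ⁻¹' B)))
      ⟨hB, LFCMSpace.isBounded_saturation hfA⟩)

def pushforward {f : X → Y} (hf : IsCoarseMeasurableMap 𝒳 𝒴 f) : CoarseModule 𝒴 H where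
  proj B := C.proj (f ⁻¹' B)
  proj_empty := C.proj_empty
  proj_selfAdjoint B hB := C.proj_selfAdjoint _ (hf.2 B hB)
  proj_inter hA hB := C.proj_inter (hf.2 _ hA) (hf.2 _ hB)
  proj_union hA hB hAB := C.proj_union (hf.2 _ hA) (hf.2 _ hB) (hAB.preimage f)
  nondeg := C.dense_span_range_proj_preimage hf

end CoarseModule

/-- The pushforward representation along a coarse measurable map is
non-degenerate, and hence defines a coarse module. -/
theorem pushforward_nondegenerate {X Y : Type} {H : Type}
    [NormedAddCommGroup H] [InnerProductSpace ℂ H] [CompleteSpace H]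
    (𝒳 : LFCMSpace X) (𝒴 : LFCMSpace Y) (f : X → Y)
    (hf : IsCoarseMeasurableMap 𝒳 𝒴 f) (C : CoarseModule 𝒳 H) :
    Dense (↑(Submodule.span ℂ
        (⋃ B ∈ {B | B ∈ 𝒴.meas ∧ 𝒴.coarse.IsBounded B},
          Set.range (C.proj (f ⁻¹' B)))) : Set H) ∧
      ∃ D : CoarseModule 𝒴 H, ∀ B : Set Y, D.proj B = C.proj (f ⁻¹' B) :=
  ⟨C.dense_span_range_proj_preimage hf, C.pushforward hf, fun _ => rfl⟩
end
end

section
/- Let 𝒳 be an LFCM space and C a coarse 𝒳-module. For any infinite cardinal κ, and also for κ = 1, the asymptotic equivalence class of the κ-domain dom_κ(C) is independent of the choice of the discreteness gauge: if E and F are two discreteness gauges for 𝒳, then the κ-domain computed with respect to E is asymptotically equivalent (≍) to the κ-domain computed with respect to F. -/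
noncomputable section

open scoped ENNReal

variable {X Y Z : Type}
variable {H₀ H₁ H₂ H₃ : Type}

/-! A bounded set of rank at least `κ` meets only finitely many blocks of a discrete partition,
so by subadditivity of rank one of these pieces already has rank at least `κ`: for `κ = 1` or
`κ ≥ ℵ₀` a finite sum of cardinals below `κ` stays below `κ`. That piece lies in the `κ`-domain
for the second gauge and is within the first gauge of every point of the original set. -/

theorem LFCMSpace.inter_mem (𝒳 : LFCMSpace X) {A B : Set X}
    (hA : A ∈ 𝒳.meas) (hB : B ∈ 𝒳.meas) : A ∩ B ∈ 𝒳.meas := by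
  simpa [Set.compl_union] using 𝒳.compl_mem (𝒳.union_mem (𝒳.compl_mem hA) (𝒳.compl_mem hB))

theorem LFCMSpace.biUnion_finset_mem {ι : Type} (𝒳 : LFCMSpace X) (s : Finset ι)
    {f : ι → Set X} (hf : ∀ i ∈ s, f i ∈ 𝒳.meas) : (⋃ i ∈ s, f i) ∈ 𝒳.meas := by
  classical
  induction s using Finset.induction_on with
  | empty => simpa using 𝒳.empty_mem
  | insert a s _ ih =>
    rw [Finset.set_biUnion_insert]
    exact 𝒳.union_mem (hf a (s.mem_insert_self a))
      (ih fun i hi => hf i (Finset.mem_insert_of_mem hi))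

theorem projRank_sum_le {H ι : Type} [NormedAddCommGroup H] [InnerProductSpace ℂ H]
    (s : Finset ι) (f : ι → H →L[ℂ] H) :
    projRank (∑ i ∈ s, f i) ≤ ∑ i ∈ s, projRank (f i) := by
  simpa [projRank] using LinearMap.rank_finsetSum_le s fun i => (f i : H →ₗ[ℂ] H)

theorem Cardinal.exists_le_of_le_sum {ι : Type} {κ : Cardinal}
    (hκ : κ = 1 ∨ Cardinal.aleph0 ≤ κ) {s : Finset ι} {f : ι → Cardinal}
    (h : κ ≤ ∑ i ∈ s, f i) : ∃ i ∈ s, κ ≤ f i := by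
  contrapose! h
  rcases hκ with rfl | hκ
  · exact Finset.sum_induction f (· < 1) (by simp) zero_lt_one h
  · exact Finset.sum_induction f (· < κ) (fun _ _ => Cardinal.add_lt_of_lt hκ)
      (Cardinal.aleph0_pos.trans_le hκ) h

namespace CoarseModule

variable {H : Type} [NormedAddCommGroup H] [InnerProductSpace ℂ H] [CompleteSpace H]
  {𝒳 : LFCMSpace X} (C : CoarseModule 𝒳 H)

theorem proj_biUnion_finset {ι : Type} (s : Finset ι) {f : ι → Set X}
    (hf : ∀ i ∈ s, f i ∈ 𝒳.meas) (hdisj : (s : Set ι).PairwiseDisjoint f) :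
    C.proj (⋃ i ∈ s, f i) = ∑ i ∈ s, C.proj (f i) := by
  classical
  induction s using Finset.induction_on with
  | empty => simpa using C.proj_empty
  | insert a s ha ih =>
    have hfs : ∀ i ∈ s, f i ∈ 𝒳.meas := fun i hi => hf i (Finset.mem_insert_of_mem hi)
    have hdisj_a : Disjoint (f a) (⋃ i ∈ s, f i) :=
      Set.disjoint_iUnion₂_right.mpr fun i hi =>
        hdisj (by simp) (by simp [hi]) fun hai => ha (hai ▸ hi)
    rw [Finset.set_biUnion_insert, Finset.sum_insert ha,
      C.proj_union (hf a (s.mem_insert_self a)) (𝒳.biUnion_finset_mem s hfs) hdisj_a,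
      ih hfs (hdisj.subset (by simp))]

theorem nonempty_of_projRank_ne_zero {A : Set X} (h : projRank (C.proj A) ≠ 0) :
    A.Nonempty := by
  contrapose! h
  simp [h, C.proj_empty, projRank]

theorem exists_block_le_projRank_inter {κ : Cardinal} (hκ : κ = 1 ∨ Cardinal.aleph0 ≤ κ)
    {P : Set (Set X)} (hP : IsDiscretePartition 𝒳.coarse 𝒳.meas P) {A : Set X}
    (hA : A ∈ 𝒳.meas) (hAb : 𝒳.coarse.IsBounded A) (hrk : κ ≤ projRank (C.proj A)) :
    ∃ B ∈ P, κ ≤ projRank (C.proj (A ∩ B)) := by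
  set s := (hP.locallyFinite A hAb).toFinset
  have hs : ∀ B, B ∈ s ↔ B ∈ P ∧ (B ∩ A).Nonempty := fun B => Set.Finite.mem_toFinset _
  have hcover : A = ⋃ B ∈ s, A ∩ B := by
    refine (Set.iUnion₂_subset fun _ _ => Set.inter_subset_left).antisymm' fun a ha => ?_
    obtain ⟨B, hBP, haB⟩ := Set.mem_sUnion.mp (hP.covers ▸ Set.mem_univ a)
    exact Set.mem_biUnion ((hs B).mpr ⟨hBP, a, haB, ha⟩) ⟨ha, haB⟩
  have hsum : C.proj A = ∑ B ∈ s, C.proj (A ∩ B) := by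
    conv_lhs => rw [hcover]
    refine C.proj_biUnion_finset s (fun B hB => 𝒳.inter_mem hA (hP.measurable ((hs B).mp hB).1))
      fun B hB B' hB' hne => ?_
    exact (hP.pairwiseDisjoint B ((hs B).mp hB).1 B' ((hs B').mp hB').1 hne).mono
      Set.inter_subset_right Set.inter_subset_right
  obtain ⟨B, hB, hBrk⟩ :=
    Cardinal.exists_le_of_le_sum hκ (hrk.trans (hsum ▸ projRank_sum_le s _))
  exact ⟨B, ((hs B).mp hB).1, hBrk⟩

end CoarseModule

theorem domKappaAt_subordinate {H : Type} [NormedAddCommGroup H] [InnerProductSpace ℂ H]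
    [CompleteSpace H] {𝒳 : LFCMSpace X} (C : CoarseModule 𝒳 H) {κ : Cardinal}
    (hκ : κ = 1 ∨ Cardinal.aleph0 ≤ κ) {E F : Set (X × X)} (hE : E ∈ 𝒳.coarse.entourages)
    {P : Set (Set X)} (hP : IsDiscretePartition 𝒳.coarse 𝒳.meas P)
    (hPF : ∀ B ∈ P, B ×ˢ B ⊆ F) :
    𝒳.coarse.Subordinate (domKappaAt 𝒳 C E κ) (domKappaAt 𝒳 C F κ) := by
  refine ⟨E, hE, ?_⟩
  rintro x ⟨A, ⟨hA, hAE, hArk⟩, hxA⟩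
  obtain ⟨B, hBP, hBrk⟩ := C.exists_block_le_projRank_inter hκ hP hA ⟨E, hE, hAE⟩ hArk
  have hκ0 : κ ≠ 0 := hκ.elim (fun h => h ▸ one_ne_zero)
    fun h => (Cardinal.aleph0_pos.trans_le h).ne'
  obtain ⟨a, haA, haB⟩ :=
    C.nonempty_of_projRank_ne_zero ((pos_iff_ne_zero.mpr hκ0).trans_le hBrk).ne'
  have hABF : A ∩ B ⊆ domKappaAt 𝒳 C F κ :=
    Set.subset_sUnion_of_mem ⟨𝒳.inter_mem hA (hP.measurable hBP),
      (Set.prod_mono Set.inter_subset_right Set.inter_subset_right).trans (hPF B hBP), hBrk⟩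
  exact ⟨a, hABF ⟨haA, haB⟩, hAE ⟨hxA, haA⟩⟩

/-- For κ infinite or κ = 1, the asymptotic equivalence class of the
κ-domain of a coarse module does not depend on the choice of discreteness gauge. -/
theorem domKappaAt_gauge_independent {X : Type} {H : Type}
    [NormedAddCommGroup H] [InnerProductSpace ℂ H] [CompleteSpace H]
    (𝒳 : LFCMSpace X) (C : CoarseModule 𝒳 H)
    (κ : Cardinal) (hκ : κ = 1 ∨ Cardinal.aleph0 ≤ κ)
    (E F : Set (X × X))
    (hE : 𝒳.IsDiscretenessGauge E) (hF : 𝒳.IsDiscretenessGauge F) :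
    𝒳.coarse.Asymptotic (domKappaAt 𝒳 C E κ) (domKappaAt 𝒳 C F κ) := by
  obtain ⟨⟨hE, -⟩, P, hP, hPE⟩ := hE
  obtain ⟨⟨hF, -⟩, Q, hQ, hQF⟩ := hF
  exact ⟨domKappaAt_subordinate C hκ hE hQ hQF, domKappaAt_subordinate C hκ hF hP hPE⟩
end
end

section
/- Let 𝒳 be an LFCM space and C₀, C₁ coarse 𝒳-modules. Any bounded invertible operator g : H_{C₀} → H_{C₁} is coarsely full, i.e. π₁(Supp(g)) ≍ dom₁(C₁), where π₁ is the projection of X × X onto the first (target) coordinate. -/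
noncomputable section

open scoped ENNReal

variable {X Y Z : Type}
variable {H₀ H₁ H₂ H₃ : Type}

/-- Subordination from inclusion, via the diagonal entourage. -/
theorem subordinate_of_subset' {X : Type} (C : CoarseSpace X) {A B : Set X} (h : A ⊆ B) :
    C.Subordinate A B :=
  ⟨{p : X × X | p.1 = p.2}, C.diagonal_mem, fun x hx => ⟨x, h hx, rfl⟩⟩

/-- A projection has rank at least one iff it is nonzero. -/
theorem one_le_projRank_iff {H : Type} [NormedAddCommGroup H] [InnerProductSpace ℂ H]
    (p : H →L[ℂ] H) : 1 ≤ projRank p ↔ p ≠ 0 := by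
  rw [Cardinal.one_le_iff_pos, projRank, LinearMap.rank, rank_pos_iff_nontrivial,
    Submodule.nontrivial_iff_ne_bot, Ne, LinearMap.range_eq_bot]
  constructor
  · intro h hp; exact h (by rw [hp]; rfl)
  · intro h hp
    exact h (by ext x; exact DFunLike.congr_fun hp x)

/-- Finite additivity of the projections of a coarse module over a pairwise
disjoint family of measurable sets. -/
theorem proj_biUnion_finset {X : Type} {H : Type} [NormedAddCommGroup H]
    [InnerProductSpace ℂ H] [CompleteSpace H] {𝒳 : LFCMSpace X} (M : CoarseModule 𝒳 H)
    {ι : Type} (T : Finset ι) (f : ι → Set X) (hm : ∀ i ∈ T, f i ∈ 𝒳.meas)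
    (hd : ∀ i ∈ T, ∀ j ∈ T, i ≠ j → Disjoint (f i) (f j)) :
    (⋃ i ∈ T, f i) ∈ 𝒳.meas ∧ M.proj (⋃ i ∈ T, f i) = ∑ i ∈ T, M.proj (f i) := by
  classical
  induction T using Finset.induction_on with
  | empty => simpa using ⟨𝒳.empty_mem, M.proj_empty⟩
  | @insert a T ha ih =>
    have hm' : ∀ i ∈ T, f i ∈ 𝒳.meas := fun i hi => hm i (Finset.mem_insert_of_mem hi)
    have hd' : ∀ i ∈ T, ∀ j ∈ T, i ≠ j → Disjoint (f i) (f j) := fun i hi j hj =>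
      hd i (Finset.mem_insert_of_mem hi) j (Finset.mem_insert_of_mem hj)
    obtain ⟨ihm, ihs⟩ := ih hm' hd'
    have hcup : (⋃ i ∈ insert a T, f i) = f a ∪ ⋃ i ∈ T, f i := by
      simp [Set.biUnion_insert]
    have hma : f a ∈ 𝒳.meas := hm a (Finset.mem_insert_self a T)
    have hdisj : Disjoint (f a) (⋃ i ∈ T, f i) := by
      rw [Set.disjoint_iUnion₂_right]
      intro i hi
      exact hd a (Finset.mem_insert_self a T) i (Finset.mem_insert_of_mem hi)
        (fun h => ha (h ▸ hi))
    constructor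
    · rw [hcup]; exact 𝒳.union_mem hma ihm
    · rw [hcup, M.proj_union hma ihm hdisj, ihs, Finset.sum_insert ha]

/-- Any bounded invertible operator between coarse modules is coarsely
full: the target projection of its support is asymptotic to the faithfulness domain. -/
theorem invertible_coarselyFull {X : Type} {H₀ H₁ : Type}
    [NormedAddCommGroup H₀] [InnerProductSpace ℂ H₀] [CompleteSpace H₀]
    [NormedAddCommGroup H₁] [InnerProductSpace ℂ H₁] [CompleteSpace H₁]
    (𝒳 : LFCMSpace X) (C₀ : CoarseModule 𝒳 H₀) (C₁ : CoarseModule 𝒳 H₁)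
    (g : H₀ ≃L[ℂ] H₁) :
    𝒳.coarse.Asymptotic
      (Prod.fst '' opSupp 𝒳 𝒳 C₀.proj C₁.proj (g : H₀ →L[ℂ] H₁))
      (domKappa 𝒳 C₁ 1) := by
  classical
  constructor
  · -- π₁(Supp g) ⊆ dom₁(C₁)
    apply subordinate_of_subset'
    rintro y ⟨⟨y', x⟩, hmem, rfl⟩
    obtain ⟨s, ⟨B, A, rfl, hBmeas, hBdisc, hAmeas, hAdisc, hne⟩, hyB, hxA⟩ := hmem
    refine ⟨B, ⟨hBmeas, hBdisc, ?_⟩, hyB⟩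
    rw [one_le_projRank_iff]
    intro h
    exact hne (by rw [← ContinuousLinearMap.comp_assoc, h]; simp)
  · -- dom₁(C₁) ⊆ π₁(Supp g)
    apply subordinate_of_subset'
    rintro y ⟨A, ⟨hAmeas, hAdisc, hArank⟩, hyA⟩
    have hA0 : C₁.proj A ≠ 0 := (one_le_projRank_iff _).mp hArank
    set f : H₀ →L[ℂ] H₁ := C₁.proj A ∘L (g : H₀ →L[ℂ] H₁) with hf
    -- f ≠ 0 since g is invertible
    have hf0 : f ≠ 0 := by
      intro h
      apply hA0
      ext v
      have := DFunLike.congr_fun h (g.symm v)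
      simpa [hf] using this
    -- find a bounded measurable B' with f ∘L proj B' ≠ 0
    have hex : ∃ B' ∈ {A | A ∈ 𝒳.meas ∧ 𝒳.coarse.IsBounded A}, f ∘L C₀.proj B' ≠ 0 := by
      by_contra hcon
      push_neg at hcon
      apply hf0
      have hle : Submodule.span ℂ
          (⋃ B ∈ {A | A ∈ 𝒳.meas ∧ 𝒳.coarse.IsBounded A}, Set.range (C₀.proj B)) ≤
          LinearMap.ker (f : H₀ →ₗ[ℂ] H₁) := by
        rw [Submodule.span_le]
        rintro w hw
        simp only [Set.mem_iUnion] at hw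
        obtain ⟨B, hB, u, rfl⟩ := hw
        have := DFunLike.congr_fun (hcon B hB) u
        simpa using this
      have heq : (f : H₀ → H₁) = ((0 : H₀ →L[ℂ] H₁) : H₀ → H₁) :=
        Continuous.ext_on C₀.nondeg f.continuous (0 : H₀ →L[ℂ] H₁).continuous
          (fun v hv => hle hv)
      ext v
      exact congrFun heq v
    obtain ⟨B', ⟨hB'meas, hB'bdd⟩, hB'ne⟩ := hex
    -- decompose B' into partition blocks
    set S : Set (Set X) := {P | P ∈ 𝒳.partition ∧ (P ∩ B').Nonempty} with hS
    have hSfin : S.Finite := 𝒳.isPartition.locallyFinite B' hB'bdd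
    set T : Finset (Set X) := hSfin.toFinset with hT
    have hcover : B' = ⋃ P ∈ T, B' ∩ P := by
      ext x
      constructor
      · intro hx
        have hxuniv : x ∈ ⋃₀ 𝒳.partition := by rw [𝒳.isPartition.covers]; trivial
        obtain ⟨P, hP, hxP⟩ := hxuniv
        have hPS : P ∈ T := by
          rw [hT, Set.Finite.mem_toFinset]
          exact ⟨hP, ⟨x, hxP, hx⟩⟩
        exact Set.mem_biUnion hPS ⟨hx, hxP⟩
      · intro hx
        simp only [Set.mem_iUnion] at hx
        obtain ⟨P, hP, hxB, hxP⟩ := hx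
        exact hxB
    have hmeas' : ∀ P ∈ T, B' ∩ P ∈ 𝒳.meas := by
      intro P hP
      rw [hT, Set.Finite.mem_toFinset] at hP
      exact (𝒳.isPartition.meas_iff B').mp hB'meas P hP.1
    have hdisj' : ∀ P ∈ T, ∀ Q ∈ T, P ≠ Q → Disjoint (B' ∩ P) (B' ∩ Q) := by
      intro P hP Q hQ hPQ
      rw [hT, Set.Finite.mem_toFinset] at hP hQ
      exact Set.disjoint_of_subset Set.inter_subset_right Set.inter_subset_right
        (𝒳.isPartition.pairwiseDisjoint P hP.1 Q hQ.1 hPQ)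
    obtain ⟨-, hsum⟩ := proj_biUnion_finset C₀ T (fun P => B' ∩ P) hmeas' hdisj'
    -- some block composite is nonzero
    have hexP : ∃ P ∈ T, f ∘L C₀.proj (B' ∩ P) ≠ 0 := by
      by_contra hcon
      push_neg at hcon
      apply hB'ne
      have : C₀.proj B' = ∑ P ∈ T, C₀.proj (B' ∩ P) := by
        rw [← hsum]; exact congrArg C₀.proj hcover
      ext v
      rw [ContinuousLinearMap.comp_apply, this]
      simp only [ContinuousLinearMap.sum_apply, map_sum]
      refine Finset.sum_eq_zero fun P hP => ?_
      have := DFunLike.congr_fun (hcon P hP) v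
      simpa using this
    obtain ⟨P, hPT, hPne⟩ := hexP
    rw [hT, Set.Finite.mem_toFinset] at hPT
    have hBP : (B' ∩ P).Nonempty := by
      by_contra h
      rw [Set.not_nonempty_iff_eq_empty] at h
      apply hPne
      rw [h, C₀.proj_empty]
      ext v; simp
    obtain ⟨x, hxB', hxP⟩ := hBP
    refine ⟨(y, x), ?_, rfl⟩
    refine ⟨A ×ˢ (B' ∩ P), ⟨A, B' ∩ P, rfl, hAmeas, hAdisc,
      (𝒳.isPartition.meas_iff B').mp hB'meas P hPT.1, ?_, ?_⟩, hyA, hxB', hxP⟩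
    · intro p hp
      exact Set.mem_biUnion hPT.1 ⟨hp.1.2, hp.2.2⟩
    · intro h
      apply hPne
      rw [hf, ContinuousLinearMap.comp_assoc]
      exact h
end
end

section
/- Let 𝒳 be an LFCM space with discrete partition {A_i}_{i∈I}, let κ be an infinite cardinal or κ = 1, let C⁰ and C¹ be coarse 𝒳-modules, and let t : C⁰ → C¹ be an invertible operator of controlled propagation. Then for every E^X_disc-bounded measurable subset B of X with rk(1^{C¹}_B) ≥ κ, there exists an element A of the discrete partition {A_i}_{i∈I} such that rk(1^{C⁰}_A) ≥ κ and 1^{C¹}_B t 1^{C⁰}_A ≠ 0. -/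
noncomputable section

open scoped ENNReal

variable {X Y Z : Type}
variable {H₀ H₁ H₂ H₃ : Type}

/-!
Suppose every block `A` with `1_B t 1_A ≠ 0` had rank `< κ`. Since `t` has controlled propagation
and `B` is bounded, only finitely many blocks `A` satisfy `1_B t 1_A ≠ 0`, and by nondegeneracy
of the module `1_B t` is the sum of the `1_B t 1_A` over these blocks. As `t` is invertible,
`1_B = (1_B t) t⁻¹`, so `rk 1_B ≤ ∑ rk 1_A`, a finite sum of cardinals `< κ`; this is `< κ`
because `κ = 1` or `κ` is infinite, contradicting `rk 1_B ≥ κ`.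
-/

namespace CoarseSpace

variable {X : Type}

theorem isBounded_nbhd (C : CoarseSpace X) {E : Set (X × X)} (hE : E ∈ C.entourages)
    {A : Set X} (hA : C.IsBounded A) : C.IsBounded (nbhd E A) := by
  obtain ⟨F, hF, hAF⟩ := hA
  refine ⟨RelComp E (RelComp F (RelTrans E)),
    C.comp_mem hE (C.comp_mem hF (C.transpose_mem hE)), ?_⟩
  rintro ⟨x, y⟩ ⟨⟨a, ha, hxa⟩, ⟨b, hb, hyb⟩⟩
  exact ⟨a, hxa, b, hAF ⟨ha, hb⟩, hyb⟩

end CoarseSpace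

namespace LFCMSpace

variable {X : Type}

theorem inter_mem_s6 (𝒳 : LFCMSpace X) {A B : Set X} (hA : A ∈ 𝒳.meas) (hB : B ∈ 𝒳.meas) :
    A ∩ B ∈ 𝒳.meas := by
  simpa [Set.compl_union] using 𝒳.compl_mem (𝒳.union_mem (𝒳.compl_mem hA) (𝒳.compl_mem hB))

end LFCMSpace

namespace CoarseModule

variable {X H H' : Type} [NormedAddCommGroup H] [InnerProductSpace ℂ H] [CompleteSpace H]
  [NormedAddCommGroup H'] [InnerProductSpace ℂ H'] {𝒳 : LFCMSpace X} (M : CoarseModule 𝒳 H)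

theorem biUnion_mem_and_proj_biUnion {ι : Type} (s : Finset ι) {f : ι → Set X}
    (hmeas : ∀ i ∈ s, f i ∈ 𝒳.meas) (hdisj : (s : Set ι).PairwiseDisjoint f) :
    (⋃ i ∈ s, f i) ∈ 𝒳.meas ∧ M.proj (⋃ i ∈ s, f i) = ∑ i ∈ s, M.proj (f i) := by
  classical
  induction s using Finset.induction_on with
  | empty => simpa using ⟨𝒳.empty_mem, M.proj_empty⟩
  | insert i s hi ih =>
    rw [Finset.coe_insert, Set.pairwiseDisjoint_insert] at hdisj
    obtain ⟨hUmeas, hUproj⟩ :=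
      ih (fun j hj => hmeas j (Finset.mem_insert_of_mem hj)) hdisj.1
    have hfi := hmeas i (Finset.mem_insert_self i s)
    have hd : Disjoint (f i) (⋃ j ∈ s, f j) :=
      Set.disjoint_iUnion₂_right.2 fun j hj => hdisj.2 j hj (fun h => hi (h ▸ hj))
    rw [Finset.set_biUnion_insert, Finset.sum_insert hi, M.proj_union hfi hUmeas hd, hUproj]
    exact ⟨𝒳.union_mem hfi hUmeas, rfl⟩

theorem ext_of_comp_proj {s s' : H →L[ℂ] H'}
    (h : ∀ D ∈ 𝒳.meas, 𝒳.coarse.IsBounded D → s ∘L M.proj D = s' ∘L M.proj D) : s = s' := by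
  refine ContinuousLinearMap.ext_on M.nondeg ?_
  intro v hv
  simp only [Set.mem_iUnion, Set.mem_range] at hv
  obtain ⟨D, ⟨hD, hDb⟩, w, rfl⟩ := hv
  exact congrArg (· w) (h D hD hDb)

theorem proj_eq_sum_comp {D : Set X} (hD : D ∈ 𝒳.meas) {T : Finset (Set X)}
    (hT : ∀ A ∈ T, A ∈ 𝒳.partition)
    (hcover : ∀ A ∈ 𝒳.partition, (A ∩ D).Nonempty → A ∈ T) :
    M.proj D = ∑ A ∈ T, M.proj A ∘L M.proj D := by
  have hD_eq : D = ⋃ A ∈ T, A ∩ D := by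
    ext x
    simp only [Set.mem_iUnion, Set.mem_inter_iff, exists_prop]
    refine ⟨fun hx => ?_, fun ⟨_, _, _, hx⟩ => hx⟩
    obtain ⟨A, hA, hxA⟩ := Set.mem_sUnion.1 (𝒳.isPartition.covers ▸ Set.mem_univ x)
    exact ⟨A, hcover A hA ⟨x, hxA, hx⟩, hxA, hx⟩
  have hmeas : ∀ A ∈ T, A ∩ D ∈ 𝒳.meas :=
    fun A hA => 𝒳.inter_mem_s6 (𝒳.isPartition.measurable (hT A hA)) hD
  have hdisj : (T : Set (Set X)).PairwiseDisjoint (· ∩ D) :=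
    fun A hA A' hA' hne => (𝒳.isPartition.pairwiseDisjoint A (hT A hA) A' (hT A' hA') hne).mono
      Set.inter_subset_left Set.inter_subset_left
  conv_lhs => rw [hD_eq, (M.biUnion_mem_and_proj_biUnion T hmeas hdisj).2]
  exact Finset.sum_congr rfl fun A hA => M.proj_inter (𝒳.isPartition.measurable (hT A hA)) hD

theorem eq_sum_comp_proj (s : H →L[ℂ] H') {F : Finset (Set X)} (hF : ∀ A ∈ F, A ∈ 𝒳.partition)
    (hs : ∀ A ∈ 𝒳.partition, A ∉ F → s ∘L M.proj A = 0) :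
    s = ∑ A ∈ F, s ∘L M.proj A := by
  classical
  refine M.ext_of_comp_proj fun D hD hDb => ?_
  set T := F ∪ (𝒳.isPartition.locallyFinite D hDb).toFinset
  have hT : ∀ A ∈ T, A ∈ 𝒳.partition := by
    intro A hA
    rcases Finset.mem_union.1 hA with hA | hA
    exacts [hF A hA, ((Set.Finite.mem_toFinset _).1 hA).1]
  have hcover : ∀ A ∈ 𝒳.partition, (A ∩ D).Nonempty → A ∈ T :=
    fun A hA hAD => Finset.mem_union_right _ ((Set.Finite.mem_toFinset _).2 ⟨hA, hAD⟩)
  calc s ∘L M.proj D = ∑ A ∈ T, s ∘L M.proj A ∘L M.proj D := by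
        conv_lhs => rw [M.proj_eq_sum_comp hD hT hcover]
        rw [ContinuousLinearMap.comp_finsetSum]
    _ = ∑ A ∈ F, s ∘L M.proj A ∘L M.proj D := by
        refine (Finset.sum_subset Finset.subset_union_left fun A hAT hAF => ?_).symm
        rw [← ContinuousLinearMap.comp_assoc, hs A (hT A hAT) hAF,
          ContinuousLinearMap.zero_comp]
    _ = (∑ A ∈ F, s ∘L M.proj A) ∘L M.proj D := by
        rw [ContinuousLinearMap.finsetSum_comp]
        rfl

end CoarseModule

section Propagation

variable {X : Type} {H₀ H₁ : Type}
  [NormedAddCommGroup H₀] [InnerProductSpace ℂ H₀] [CompleteSpace H₀]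
  [NormedAddCommGroup H₁] [InnerProductSpace ℂ H₁] [CompleteSpace H₁]
  {𝒳 : LFCMSpace X}

/-- Such blocks lie in the `Supp t`-neighbourhood of `B`, which is bounded, so local finiteness
of the partition applies. -/
theorem HasControlledPropagation.finite_blocks_comp_ne_zero (C0 : CoarseModule 𝒳 H₀)
    (C1 : CoarseModule 𝒳 H₁) {t : H₀ →L[ℂ] H₁} (ht : HasControlledPropagation 𝒳 C0.proj C1.proj t)
    {B : Set X} (hBmeas : B ∈ 𝒳.meas) (hBbdd : B ×ˢ B ⊆ 𝒳.disc) :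
    {A | A ∈ 𝒳.partition ∧ C1.proj B ∘L t ∘L C0.proj A ≠ 0}.Finite := by
  set N := CoarseSpace.nbhd (RelTrans (opSupp 𝒳 𝒳 C0.proj C1.proj t)) B
  have hN : 𝒳.coarse.IsBounded N :=
    𝒳.coarse.isBounded_nbhd (𝒳.coarse.transpose_mem ht) ⟨𝒳.disc, 𝒳.disc_mem, hBbdd⟩
  refine (𝒳.isPartition.locallyFinite N hN).subset ?_
  rintro A ⟨hA, hne⟩
  obtain ⟨b, hb⟩ : B.Nonempty := by
    refine Set.nonempty_iff_ne_empty.2 fun hB => hne ?_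
    rw [hB, C1.proj_empty, ContinuousLinearMap.zero_comp]
  obtain ⟨a, ha⟩ := 𝒳.isPartition.nonempty A hA
  have hAdisc : A ×ˢ A ⊆ 𝒳.disc := fun p hp => Set.mem_biUnion hA hp
  refine ⟨hA, a, ha, b, hb, ?_⟩
  exact ⟨B ×ˢ A, ⟨B, A, rfl, hBmeas, hBbdd, 𝒳.isPartition.measurable hA, hAdisc, hne⟩, hb, ha⟩

end Propagation

theorem rank_le_sum_projRank_of_eq_sum_comp {H₀ H₁ : Type}
    [NormedAddCommGroup H₀] [InnerProductSpace ℂ H₀] [NormedAddCommGroup H₁]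
    [InnerProductSpace ℂ H₁] {ι : Type} (F : Finset ι) (s : H₀ →L[ℂ] H₁) (p : ι → H₀ →L[ℂ] H₀)
    (hs : s = ∑ i ∈ F, s ∘L p i) :
    LinearMap.rank (s : H₀ →ₗ[ℂ] H₁) ≤ ∑ i ∈ F, projRank (p i) := by
  calc LinearMap.rank (s : H₀ →ₗ[ℂ] H₁)
      = LinearMap.rank (∑ i ∈ F, ((s ∘L p i : H₀ →L[ℂ] H₁) : H₀ →ₗ[ℂ] H₁)) := by
        conv_lhs => rw [hs, ContinuousLinearMap.toLinearMap_sum]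
    _ ≤ ∑ i ∈ F, LinearMap.rank ((s ∘L p i : H₀ →L[ℂ] H₁) : H₀ →ₗ[ℂ] H₁) :=
        LinearMap.rank_finsetSum_le _ _
    _ ≤ ∑ i ∈ F, projRank (p i) :=
        Finset.sum_le_sum fun i _ => LinearMap.rank_comp_le_right _ _

theorem Cardinal.finset_sum_lt_of_forall_lt {κ : Cardinal} (hκ : κ = 1 ∨ Cardinal.aleph0 ≤ κ)
    {ι : Type} (F : Finset ι) (f : ι → Cardinal) (h : ∀ i ∈ F, f i < κ) :
    ∑ i ∈ F, f i < κ := by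
  rcases hκ with rfl | hκ
  · simp_all
  · exact Finset.sum_induction f (· < κ) (fun _ _ => Cardinal.add_lt_of_lt hκ)
      (Cardinal.aleph0_pos.trans_le hκ) h

/-- Translations of the κ-domain: an invertible controlled propagation
operator moves high-rank blocks to high-rank blocks of the discrete partition. -/
theorem translations_of_domain {X : Type} {H₀ H₁ : Type}
    [NormedAddCommGroup H₀] [InnerProductSpace ℂ H₀] [CompleteSpace H₀]
    [NormedAddCommGroup H₁] [InnerProductSpace ℂ H₁] [CompleteSpace H₁]
    (𝒳 : LFCMSpace X) (C0 : CoarseModule 𝒳 H₀) (C1 : CoarseModule 𝒳 H₁)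
    (κ : Cardinal) (hκ : κ = 1 ∨ Cardinal.aleph0 ≤ κ)
    (t : H₀ ≃L[ℂ] H₁)
    (ht : HasControlledPropagation 𝒳 C0.proj C1.proj (t : H₀ →L[ℂ] H₁))
    (B : Set X) (hBmeas : B ∈ 𝒳.meas) (hBbdd : B ×ˢ B ⊆ 𝒳.disc)
    (hBrank : κ ≤ projRank (C1.proj B)) :
    ∃ A ∈ 𝒳.partition, κ ≤ projRank (C0.proj A) ∧
      C1.proj B ∘L (t : H₀ →L[ℂ] H₁) ∘L C0.proj A ≠ 0 := by
  by_contra! hsmall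
  set s := C1.proj B ∘L (t : H₀ →L[ℂ] H₁)
  have hfin := ht.finite_blocks_comp_ne_zero C0 C1 hBmeas hBbdd
  set F := hfin.toFinset
  have hs : s = ∑ A ∈ F, s ∘L C0.proj A :=
    C0.eq_sum_comp_proj s (fun A hA => (hfin.mem_toFinset.1 hA).1)
      fun A hA hAF => by_contra fun hne => hAF (hfin.mem_toFinset.2 ⟨hA, hne⟩)
  have hB_eq : C1.proj B = s ∘L (t.symm : H₁ →L[ℂ] H₀) := by
    ext v
    simp [s]
  have hsmall_rank : ∀ A ∈ F, projRank (C0.proj A) < κ := fun A hA =>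
    not_le.1 fun hκA => (hfin.mem_toFinset.1 hA).2 (hsmall A (hfin.mem_toFinset.1 hA).1 hκA)
  refine (hBrank.trans ?_).not_gt (Cardinal.finset_sum_lt_of_forall_lt hκ F _ hsmall_rank)
  calc projRank (C1.proj B) ≤ LinearMap.rank (s : H₀ →ₗ[ℂ] H₁) := by
        rw [projRank, hB_eq, ContinuousLinearMap.toLinearMap_comp]
        exact LinearMap.rank_comp_le_left _ _
    _ ≤ ∑ A ∈ F, projRank (C0.proj A) := rank_le_sum_projRank_of_eq_sum_comp F s _ hs
end
end
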